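/- Let C be a finite cyclic group of order n ≥ 1 and K a field of characteristic zero. If φ₁, φ₂ : C →* Kˣ are two injective monoid homomorphisms into the units of K, then the induced ℚ-algebra homomorphisms MonoidAlgebra ℚ C → K (sending each group element g to φᵢ(g)) have the same kernel. -/

import Mathlib

/-!
Choose a generator `g` of `C`. Then `ℚ[X] → ℚ[C]`, `X ↦ g`, is surjective, and composing it with
the lift of `φ` gives evaluation at `φ g`. Hence the kernel of the lift is the image of the
ideal generated by the minimal polynomial of `φ g`. As `φ` is injective, `φ g` is a primitive
root of unity of order `orderOf g`, so this minimal polynomial is the cyclotomic polynomial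
`Φ_{orderOf g}`, whichever `φ` we started from.
-/

open Polynomial

namespace MonoidAlgebra

variable {R C : Type*} [CommRing R] [Monoid C] {g : C}

theorem aeval_of_surjective (hg : ∀ x : C, x ∈ Submonoid.powers g) :
    Function.Surjective (aeval (R := R) (of R C g)) := by
  intro x
  induction x using MonoidAlgebra.induction_on with
  | of c =>
    obtain ⟨k, rfl⟩ := hg c
    exact ⟨X ^ k, by simp⟩
  | add a b ha hb =>
    obtain ⟨p, rfl⟩ := ha
    obtain ⟨q, rfl⟩ := hb
    exact ⟨p + q, map_add _ p q⟩
  | smul r a ha =>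
    obtain ⟨p, rfl⟩ := ha
    exact ⟨r • p, map_smul _ r p⟩

theorem ker_lift_eq_map_ker_aeval {A : Type*} [CommRing A] [Algebra R A]
    (hg : ∀ x : C, x ∈ Submonoid.powers g) (F : C →* A) :
    RingHom.ker (lift R A C F) = (RingHom.ker (aeval (R := R) (F g))).map (aeval (of R C g)) := by
  have hcomp : (lift R A C F).comp (aeval (of R C g)) = aeval (F g) := by
    rw [← aeval_algHom, lift_of]
  rw [← hcomp, ← Ideal.map_comap_of_surjective _ (aeval_of_surjective hg)
    (RingHom.ker (lift R A C F))]
  rfl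

end MonoidAlgebra

theorem minpoly_rat_eq_cyclotomic_orderOf {C K : Type*} [Group C] [Field K] [CharZero K]
    {g : C} (hg : IsOfFinOrder g) {φ : C →* Kˣ} (hφ : Function.Injective φ) :
    minpoly ℚ (φ g : K) = cyclotomic (orderOf g) ℚ := by
  have hζ : IsPrimitiveRoot (φ g : K) (orderOf g) := by
    rw [← orderOf_injective φ hφ g, ← orderOf_units]
    exact IsPrimitiveRoot.orderOf _
  exact (cyclotomic_eq_minpoly_rat hζ hg.orderOf_pos).symm

theorem ker_monoidAlgebra_lift_eq_of_injective_general
    {C K : Type*} [Group C] [Fintype C] [IsCyclic C] [Field K] [CharZero K]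
    (φ₁ φ₂ : C →* Kˣ)
    (h₁ : Function.Injective φ₁) (h₂ : Function.Injective φ₂) :
    RingHom.ker ((MonoidAlgebra.lift ℚ K C) ((Units.coeHom K).comp φ₁)) =
      RingHom.ker ((MonoidAlgebra.lift ℚ K C) ((Units.coeHom K).comp φ₂)) := by
  obtain ⟨g, hg⟩ := IsCyclic.exists_generator (α := C)
  have hfin : IsOfFinOrder g := isOfFinOrder_of_finite g
  have hpowers : ∀ x : C, x ∈ Submonoid.powers g :=
    fun x => hfin.mem_powers_iff_mem_zpowers.mpr (hg x)
  simp only [MonoidAlgebra.ker_lift_eq_map_ker_aeval hpowers, MonoidHom.comp_apply, Units.coeHom_apply, minpoly.ker_aeval_eq_span_minpoly,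
    minpoly_rat_eq_cyclotomic_orderOf hfin h₁, minpoly_rat_eq_cyclotomic_orderOf hfin h₂]

/-- Let `C` be a finite cyclic group of order `n ≥ 1` and `K` a field of
characteristic zero. If `φ₁ φ₂ : C →* Kˣ` are injective, then the induced
`ℚ`-algebra homomorphisms `MonoidAlgebra ℚ C → K` have the same kernel. -/
theorem ker_monoidAlgebra_lift_eq_of_injective
    {C K : Type*} [Group C] [Fintype C] [IsCyclic C] [Field K] [CharZero K]
    (n : ℕ) (hn : 1 ≤ n) (hcard : Fintype.card C = n)
    (φ₁ φ₂ : C →* Kˣ)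
    (h₁ : Function.Injective φ₁) (h₂ : Function.Injective φ₂) :
    RingHom.ker ((MonoidAlgebra.lift ℚ K C) ((Units.coeHom K).comp φ₁)) =
      RingHom.ker ((MonoidAlgebra.lift ℚ K C) ((Units.coeHom K).comp φ₂)) :=
  ker_monoidAlgebra_lift_eq_of_injective_general φ₁ φ₂ h₁ h₂
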